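/- (Doubling identity for the τ-shifted factorial) For τ ∈ ℍ and z ∈ ℂ, the τ-shifted factorial [z;τ]_∞ = (exp(-2πiz); q̃)_∞ / (q^z; q)_∞ satisfies [1/2 + x, 1/2 - x, 1 + x, 1 - x, 1/2 + 1/(2τ) + x, 1/2 + 1/(2τ) - x, 1 + 1/(2τ) + x, 1 + 1/(2τ) - x; τ]_∞ = [1 + 2x; τ]_∞ · [1 - 2x; τ]_∞, where a product of τ-shifted factorials over several arguments denotes the product of individual factors. -/

import Mathlib

open scoped Real

/-- The infinite q-Pochhammer symbol `(a;q)_∞ = ∏_{j=0}^∞ (1 - a q^j)`. -/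
noncomputable def qPochInf (a q : ℂ) : ℂ := ∏' n : ℕ, (1 - a * q ^ n)

/-- The τ-shifted factorial `[z;τ]_∞ = (exp(-2πiz);q̃)_∞ / (q^z;q)_∞` with
`q = exp(2πiτ)` and `q̃ = exp(-2πi/τ)`. -/
noncomputable def tauShifted (τ z : ℂ) : ℂ :=
  qPochInf (Complex.exp (-(2 * (π : ℂ) * Complex.I * z)))
      (Complex.exp (-(2 * (π : ℂ) * Complex.I) / τ)) /
    qPochInf (Complex.exp (2 * (π : ℂ) * Complex.I * τ * z))
      (Complex.exp (2 * (π : ℂ) * Complex.I * τ))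

/-!
Write `𝕖 w = exp(2πiw)`. Both halves of `[z;τ]_∞` are q-Pochhammer symbols `(𝕖 w; 𝕖 t)_∞`:
the numerator with `t = -1/τ`, `w = -z`, the denominator with `t = τ`, `w = τz`, and
`Im t > 0` in both cases. From `(u;s)_∞ (-u;s)_∞ = (u²;s²)_∞` and the even/odd splitting
`(u;s)_∞ = (u;s²)_∞ (su;s²)_∞` one gets `(u, -u, su, -su; s²)_∞ = (u²;s²)_∞`; with `s = 𝕖 (t/2)`, `u = 𝕖 w` this reads
`[1/2 + y, 1 + y, 1/2 + 1/(2τ) + y, 1 + 1/(2τ) + y; τ]_∞ = [1 + 2y; τ]_∞`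
(the numerator only up to the period `1` of `𝕖`), and the theorem is this for `y = ±x`.
-/

open Complex

local notation "𝕖" w:max => cexp (2 * π * I * w)

lemma multipliable_one_sub_mul_pow (a : ℂ) {q : ℂ} (hq : ‖q‖ < 1) :
    Multipliable fun n : ℕ ↦ 1 - a * q ^ n := by
  simpa [sub_eq_add_neg] using multipliable_one_add_of_summable (f := fun n : ℕ ↦ -(a * q ^ n))
    (by simpa [norm_mul, norm_pow] using
      (summable_geometric_of_lt_one (norm_nonneg q) hq).mul_left ‖a‖)

lemma qPochInf_even_mul_odd (a : ℂ) {r : ℂ} (hr : ‖r‖ < 1) :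
    qPochInf a (r ^ 2) * qPochInf (a * r) (r ^ 2) = qPochInf a r := by
  have hr2 : ‖r ^ 2‖ < 1 := by simpa [norm_pow] using pow_lt_one₀ (norm_nonneg r) hr two_ne_zero
  have h_even (k : ℕ) : 1 - a * (r ^ 2) ^ k = 1 - a * r ^ (2 * k) := by rw [pow_mul]
  have h_odd (k : ℕ) : 1 - a * r * (r ^ 2) ^ k = 1 - a * r ^ (2 * k + 1) := by ring
  unfold qPochInf
  simp only [h_even, h_odd]
  exact tprod_even_mul_odd (f := fun n ↦ 1 - a * r ^ n)
    ((multipliable_one_sub_mul_pow a hr2).congr h_even)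
    ((multipliable_one_sub_mul_pow (a * r) hr2).congr h_odd)

lemma qPochInf_mul_qPochInf_neg (a : ℂ) {q : ℂ} (hq : ‖q‖ < 1) :
    qPochInf a q * qPochInf (-a) q = qPochInf (a ^ 2) (q ^ 2) := by
  unfold qPochInf
  rw [← (multipliable_one_sub_mul_pow a hq).tprod_mul (multipliable_one_sub_mul_pow (-a) hq)]
  exact tprod_congr fun n ↦ by ring

lemma qPochInf_sq (u : ℂ) {s : ℂ} (hs : ‖s‖ < 1) :
    qPochInf u (s ^ 2) * qPochInf (-u) (s ^ 2) * qPochInf (s * u) (s ^ 2) *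
      qPochInf (-(s * u)) (s ^ 2) = qPochInf (u ^ 2) (s ^ 2) := by
  rw [← qPochInf_mul_qPochInf_neg u hs, ← qPochInf_even_mul_odd u hs,
    ← qPochInf_even_mul_odd (-u) hs]
  ring_nf

lemma qPochInf_exp_two_mul {t : ℂ} (ht : 0 < t.im) (w : ℂ) :
    qPochInf (𝕖 w) (𝕖 t) * qPochInf (𝕖 (w + 1 / 2)) (𝕖 t) * qPochInf (𝕖 (w + t / 2)) (𝕖 t) *
      qPochInf (𝕖 (w + 1 / 2 + t / 2)) (𝕖 t) = qPochInf (𝕖 (2 * w)) (𝕖 t) := by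
  have e_add (a b : ℂ) : 𝕖 (a + b) = 𝕖 a * 𝕖 b := by rw [mul_add, exp_add]
  have e_two_mul (a : ℂ) : 𝕖 (2 * a) = 𝕖 a ^ 2 := by rw [sq, ← e_add]; ring_nf
  have e_half : 𝕖 (1 / 2) = -1 := by rw [← exp_pi_mul_I]; ring_nf
  have hs : ‖𝕖 (t / 2)‖ < 1 := UpperHalfPlane.norm_exp_two_pi_I_lt_one ⟨t / 2, by simpa using ht⟩
  have e_t : 𝕖 t = 𝕖 (t / 2) ^ 2 := by rw [← e_two_mul, mul_div_cancel₀ t two_ne_zero]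
  simp only [e_add, e_half, e_two_mul, e_t, ← qPochInf_sq (𝕖 w) hs]
  ring_nf

lemma tauShifted_eq_exp (τ z : ℂ) :
    tauShifted τ z = qPochInf (𝕖 (-z)) (𝕖 ((-τ)⁻¹)) / qPochInf (𝕖 (τ * z)) (𝕖 τ) := by
  unfold tauShifted
  congr 3 <;> ring

lemma tauShifted_duplication {τ : ℂ} (hτ : 0 < τ.im) (y : ℂ) :
    tauShifted τ (1 / 2 + y) * tauShifted τ (1 + y) * tauShifted τ (1 / 2 + 1 / (2 * τ) + y) *
      tauShifted τ (1 + 1 / (2 * τ) + y) = tauShifted τ (1 + 2 * y) := by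
  have hτ0 : τ ≠ 0 := by rintro rfl; simp at hτ
  have num := qPochInf_exp_two_mul (t := (-τ)⁻¹)
    (UpperHalfPlane.im_inv_neg_coe_pos ⟨τ, hτ⟩) (-(1 + y))
  have den := qPochInf_exp_two_mul hτ (τ * (1 / 2 + y))
  have e_periodic : 𝕖 (2 * -(1 + y)) = 𝕖 (-(1 + 2 * y)) :=
    exp_eq_exp_iff_exists_int.2 ⟨-1, by push_cast; ring⟩
  rw [e_periodic, show -(1 + y) + 1 / 2 + (-τ)⁻¹ / 2 = -(1 / 2 + 1 / (2 * τ) + y) by ring,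
    show -(1 + y) + 1 / 2 = -(1 / 2 + y) by ring,
    show -(1 + y) + (-τ)⁻¹ / 2 = -(1 + 1 / (2 * τ) + y) by ring] at num
  rw [show 2 * (τ * (1 / 2 + y)) = τ * (1 + 2 * y) by ring,
    show τ * (1 / 2 + y) + 1 / 2 + τ / 2 = τ * (1 + 1 / (2 * τ) + y) by field_simp; ring,
    show τ * (1 / 2 + y) + 1 / 2 = τ * (1 / 2 + 1 / (2 * τ) + y) by field_simp; ring,
    show τ * (1 / 2 + y) + τ / 2 = τ * (1 + y) by ring] at den
  simp only [tauShifted_eq_exp, div_mul_div_comm]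
  rw [← num, ← den]
  ring

/-- The doubling identity for the τ-shifted factorial:
`[1/2±x, 1±x, 1/2+1/(2τ)±x, 1+1/(2τ)±x; τ]_∞ = [1+2x;τ]_∞ [1-2x;τ]_∞`. -/
theorem tauShifted_doubling (τ : ℂ) (hτ : 0 < τ.im) (x : ℂ) :
    tauShifted τ (1 / 2 + x) * tauShifted τ (1 / 2 - x) *
    tauShifted τ (1 + x) * tauShifted τ (1 - x) *
    tauShifted τ (1 / 2 + 1 / (2 * τ) + x) * tauShifted τ (1 / 2 + 1 / (2 * τ) - x) *
    tauShifted τ (1 + 1 / (2 * τ) + x) * tauShifted τ (1 + 1 / (2 * τ) - x) =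
    tauShifted τ (1 + 2 * x) * tauShifted τ (1 - 2 * x) := by
  have h_neg := tauShifted_duplication hτ (-x)
  simp only [← sub_eq_add_neg, mul_neg] at h_neg
  rw [← tauShifted_duplication hτ x, ← h_neg]
  ring
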